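/- arXiv:1507.07596 — 2 statements merged into one kernel-verified Lean document; each statement's English description precedes it below -/
import Mathlib

section
/- Let p ≥ 1 and let [a_1,b_1], …, [a_p,b_p] be mutually disjoint closed real intervals with a_i < b_i. For each i let ρ_i : [a_i,b_i] → ℂ be integrable and set f_i(z) := (1/(2πi)) ∫_{a_i}^{b_i} ρ_i(x)/(x − z) dx for z ∈ ℂ∖[a_i,b_i]. Let n = (n_1,…,n_p) ∈ ℕ^p, let Q be a polynomial with deg Q ≤ |n| := n_1 + ⋯ + n_p, and suppose that for each i there is a polynomial P_i such that z^{n_i+1}·(Q(z)·f_i(z) − P_i(z)) remains bounded as z → ∞. Then for each i ∈ {1,…,p} and each integer k with 0 ≤ k ≤ n_i − 1 one has ∫_{a_i}^{b_i} Q(x)·x^k·ρ_i(x) dx = 0. -/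
open Complex Filter Topology MeasureTheory intervalIntegral
open Bornology (cobounded)

/-!
Write `C[g](z) = ∫ g(x) / (x - z) dx`. Away from the segment, `z · C[g](z) = C[x g](z) - ∫ g`,
and `C[g](z) → 0` at infinity. Hence if `z^(N+1) C[g](z)` is bounded, then `z · C[g](z)` tends
both to `0` and to `-∫ g`, so `∫ g = 0`; then `z^N C[x g](z) = z^(N+1) C[g](z)` is bounded, and
induction on `N` gives `∫ x^k g = 0` for `k < N`. The Hermite–Padé condition puts `g = Q ρ_i`
in this situation: `Q · C[ρ_i] - C[Q ρ_i]` is a polynomial, which must be `2πi P_i` since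
`Q f_i - P_i` and `C[Q ρ_i]` both tend to `0`.
-/

-- Unnormalised: the paper's `f_i` is `(2πi)⁻¹` times `cauchyTransform (a i) (b i) (ρ i)`.
noncomputable def cauchyTransform (a b : ℝ) (g : ℝ → ℂ) (z : ℂ) : ℂ :=
  ∫ x in a..b, g x / ((x : ℂ) - z)

lemma Polynomial.eq_zero_of_tendsto_cobounded {W : Polynomial ℂ}
    (h : Tendsto W.eval (cobounded ℂ) (𝓝 0)) : W = 0 := by
  rcases le_or_gt W.degree 0 with hdeg | hdeg
  · rw [Polynomial.eq_C_of_degree_le_zero hdeg] at h ⊢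
    simpa using h
  · exact absurd h.norm <| not_tendsto_nhds_of_tendsto_atTop
      (W.tendsto_norm_atTop hdeg tendsto_norm_cobounded_atTop) _

lemma tendsto_zero_of_isBoundedUnder_pow_mul {u : ℂ → ℂ} {m : ℕ}
    (h : IsBoundedUnder (· ≤ ·) (cobounded ℂ) fun z => ‖z ^ (m + 1) * u z‖) :
    Tendsto u (cobounded ℂ) (𝓝 0) := by
  obtain ⟨D, hD⟩ := h.eventually_le
  refine squeeze_zero_norm' (a := fun z => D * ‖z‖⁻¹) ?_ ?_
  · filter_upwards [hD, eventually_cobounded_le_norm 1] with z hzD hz1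
    rw [← div_eq_mul_inv, le_div_iff₀ (one_pos.trans_le hz1)]
    calc ‖u z‖ * ‖z‖ ≤ ‖u z‖ * ‖z‖ ^ (m + 1) := by
          gcongr; exact le_self_pow₀ hz1 m.succ_ne_zero
      _ = ‖z ^ (m + 1) * u z‖ := by rw [norm_mul, norm_pow, mul_comm]
      _ ≤ D := hzD
  · simpa using (tendsto_norm_cobounded_atTop.inv_tendsto_atTop).const_mul D

section CauchyTransform

variable {a b : ℝ} {g h : ℝ → ℂ} {z : ℂ}

lemma eventually_notMem_image_uIcc :
    ∀ᶠ z in cobounded ℂ, z ∉ ofReal '' Set.uIcc a b :=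
  Bornology.isBounded_def.1 (isCompact_uIcc.image continuous_ofReal).isBounded

lemma continuousOn_inv_sub_of_notMem (hz : z ∉ ofReal '' Set.uIcc a b) :
    ContinuousOn (fun x : ℝ => ((x : ℂ) - z)⁻¹) (Set.uIcc a b) :=
  (continuous_ofReal.sub continuous_const).continuousOn.inv₀ fun x hx h =>
    hz ⟨x, hx, sub_eq_zero.1 h⟩

lemma intervalIntegrable_div_sub (hg : IntervalIntegrable g volume a b)
    (hz : z ∉ ofReal '' Set.uIcc a b) :
    IntervalIntegrable (fun x : ℝ => g x / ((x : ℂ) - z)) volume a b := by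
  simpa only [div_eq_mul_inv] using hg.mul_continuousOn (continuousOn_inv_sub_of_notMem hz)

lemma IntervalIntegrable.ofReal_mul (hg : IntervalIntegrable g volume a b) :
    IntervalIntegrable (fun x : ℝ => (x : ℂ) * g x) volume a b :=
  hg.continuousOn_mul continuous_ofReal.continuousOn

lemma IntervalIntegrable.polynomial_eval_mul (hg : IntervalIntegrable g volume a b)
    (Q : Polynomial ℂ) : IntervalIntegrable (fun x : ℝ => Q.eval (x : ℂ) * g x) volume a b :=
  hg.continuousOn_mul (Q.continuous.comp continuous_ofReal).continuousOn

lemma cauchyTransform_add (hg : IntervalIntegrable g volume a b)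
    (hh : IntervalIntegrable h volume a b) (hz : z ∉ ofReal '' Set.uIcc a b) :
    cauchyTransform a b (fun x => g x + h x) z
      = cauchyTransform a b g z + cauchyTransform a b h z := by
  simp only [cauchyTransform, add_div]
  exact integral_add (intervalIntegrable_div_sub hg hz) (intervalIntegrable_div_sub hh hz)

lemma cauchyTransform_const_mul (c : ℂ) :
    cauchyTransform a b (fun x => c * g x) z = c * cauchyTransform a b g z := by
  simp only [cauchyTransform, mul_div_assoc, intervalIntegral.integral_const_mul]

lemma tendsto_cauchyTransform_cobounded (hg : IntervalIntegrable g volume a b) :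
    Tendsto (cauchyTransform a b g) (cobounded ℂ) (𝓝 0) := by
  have : (cobounded ℂ).IsCountablyGenerated := by
    rw [← comap_norm_atTop]; infer_instance
  obtain ⟨R, hR⟩ := (isCompact_uIcc (a := a) (b := b)).exists_bound_of_continuousOn
    continuous_ofReal.continuousOn
  have hlim := tendsto_integral_filter_of_dominated_convergence (μ := volume) (f := fun _ => 0)
    (F := fun z x => g x / ((x : ℂ) - z)) (l := cobounded ℂ) (fun x => ‖g x‖) ?_ ?_
    hg.norm ?_
  · rwa [intervalIntegral.integral_zero] at hlim
  · filter_upwards [eventually_notMem_image_uIcc] with z hz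
    exact (intervalIntegrable_div_sub hg hz).def'.aestronglyMeasurable
  · filter_upwards [eventually_cobounded_le_norm (R + 1)] with z hz
    refine ae_of_all _ fun x hx => ?_
    have hx1 : 1 ≤ ‖(x : ℂ) - z‖ := by
      have := hR x (Set.uIoc_subset_uIcc hx)
      have := norm_sub_norm_le z (x : ℂ)
      rw [norm_sub_rev]; linarith
    rw [norm_div]
    exact div_le_self (norm_nonneg _) hx1
  · refine ae_of_all _ fun x _ => ?_
    simpa [div_eq_mul_inv] using
      (tendsto_inv₀_cobounded.comp (tendsto_const_sub_cobounded (x : ℂ))).const_mul (g x)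

lemma mul_cauchyTransform (hg : IntervalIntegrable g volume a b)
    (hz : z ∉ ofReal '' Set.uIcc a b) :
    z * cauchyTransform a b g z
      = cauchyTransform a b (fun x => x * g x) z - ∫ x in a..b, g x := by
  rw [cauchyTransform, cauchyTransform, ← intervalIntegral.integral_const_mul,
    ← integral_sub (intervalIntegrable_div_sub hg.ofReal_mul hz) hg]
  refine integral_congr fun x hx => ?_
  have hne : (x : ℂ) - z ≠ 0 := fun h => hz ⟨x, hx, sub_eq_zero.1 h⟩
  field_simp
  ring

lemma exists_eval_mul_cauchyTransform (hg : IntervalIntegrable g volume a b) (Q : Polynomial ℂ) :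
    ∃ T : Polynomial ℂ, ∀ z ∉ ofReal '' Set.uIcc a b, Q.eval z * cauchyTransform a b g z
      = cauchyTransform a b (fun x => Q.eval (x : ℂ) * g x) z + T.eval z := by
  induction Q using Polynomial.recOnHorner generalizing g with
  | M0 => exact ⟨0, fun z _ => by simp [cauchyTransform]⟩
  | MC Q c _ _ ih =>
    obtain ⟨T, hT⟩ := ih hg
    refine ⟨T, fun z hz => ?_⟩
    simp only [Polynomial.eval_add, Polynomial.eval_C, add_mul]
    rw [cauchyTransform_add (hg.polynomial_eval_mul Q) (hg.const_mul c) hz,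
      cauchyTransform_const_mul, hT z hz]
    ring
  | MX Q _ ih =>
    obtain ⟨T, hT⟩ := ih hg.ofReal_mul
    refine ⟨T - Polynomial.C (∫ x in a..b, g x) * Q, fun z hz => ?_⟩
    simp only [Polynomial.eval_mul, Polynomial.eval_X, Polynomial.eval_sub, Polynomial.eval_C,
      mul_assoc, mul_cauchyTransform hg hz, mul_sub, hT z hz]
    ring

lemma integral_pow_mul_eq_zero_of_isBoundedUnder {N : ℕ} (hg : IntervalIntegrable g volume a b)
    (hbd : IsBoundedUnder (· ≤ ·) (cobounded ℂ)
      fun z => ‖z ^ (N + 1) * cauchyTransform a b g z‖) :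
    ∀ k < N, ∫ x in a..b, (x : ℂ) ^ k * g x = 0 := by
  induction N generalizing g with
  | zero => exact fun k hk => absurd hk k.not_lt_zero
  | succ N ih =>
    have hshift : ∀ᶠ z in cobounded ℂ,
        cauchyTransform a b (fun x => x * g x) z - (∫ x in a..b, g x)
          = z * cauchyTransform a b g z :=
      eventually_notMem_image_uIcc.mono fun z hz => (mul_cauchyTransform hg hz).symm
    have hmass : ∫ x in a..b, g x = 0 := by
      have hlim : Tendsto (fun z => z * cauchyTransform a b g z) (cobounded ℂ) (𝓝 0) :=
        tendsto_zero_of_isBoundedUnder_pow_mul (m := N) <| by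
          simpa only [← mul_assoc, ← pow_succ] using hbd
      simpa using tendsto_nhds_unique
        (((tendsto_cauchyTransform_cobounded hg.ofReal_mul).sub_const _).congr' hshift) hlim
    have hmoments := ih hg.ofReal_mul (by
      obtain ⟨D, hD⟩ := hbd.eventually_le
      refine isBoundedUnder_of_eventually_le (a := D) ?_
      filter_upwards [hD, hshift] with z hzD hz
      rw [hmass, sub_zero] at hz
      rwa [hz, ← mul_assoc, ← pow_succ])
    rintro (_ | k) hk
    · simpa using hmass
    · simpa only [pow_succ, mul_assoc] using hmoments k (Nat.lt_of_succ_lt_succ hk)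

lemma isBoundedUnder_pow_mul_cauchyTransform {N : ℕ} {Q P : Polynomial ℂ} {c : ℂ}
    (hc : c ≠ 0) (hg : IntervalIntegrable g volume a b)
    (hQP : IsBoundedUnder (· ≤ ·) (cobounded ℂ)
      fun z => ‖z ^ (N + 1) * (Q.eval z * (c * cauchyTransform a b g z) - P.eval z)‖) :
    IsBoundedUnder (· ≤ ·) (cobounded ℂ)
      fun z => ‖z ^ (N + 1) * cauchyTransform a b (fun x => Q.eval (x : ℂ) * g x) z‖ := by
  set Qg := fun x : ℝ => Q.eval (x : ℂ) * g x
  obtain ⟨T, hT⟩ := exists_eval_mul_cauchyTransform hg Q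
  have hsplit : ∀ᶠ z in cobounded ℂ,
      Q.eval z * (c * cauchyTransform a b g z) - P.eval z
        = c * cauchyTransform a b Qg z + (Polynomial.C c * T - P).eval z :=
    eventually_notMem_image_uIcc.mono fun z hz => by
      simp only [Polynomial.eval_sub, Polynomial.eval_mul, Polynomial.eval_C]
      linear_combination c * hT z hz
  have hpoly : Polynomial.C c * T - P = 0 := by
    refine Polynomial.eq_zero_of_tendsto_cobounded ?_
    have := (tendsto_zero_of_isBoundedUnder_pow_mul hQP).sub
      ((tendsto_cauchyTransform_cobounded (hg.polynomial_eval_mul Q)).const_mul c)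
    simp only [mul_zero, sub_zero] at this
    refine this.congr' (hsplit.mono fun z hz => ?_)
    simp only [hz]; ring
  obtain ⟨D, hD⟩ := hQP.eventually_le
  refine isBoundedUnder_of_eventually_le (a := ‖c‖⁻¹ * D) ?_
  filter_upwards [hD, hsplit] with z hzD hz
  rw [hz, hpoly, Polynomial.eval_zero, add_zero, mul_left_comm, norm_mul] at hzD
  rwa [le_inv_mul_iff₀ (norm_pos_iff.2 hc)]

end CauchyTransform

theorem hermitePade_orthogonality_general (p : ℕ)
    (a b : Fin p → ℝ)
    (ρ : Fin p → ℝ → ℂ)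
    (hρ : ∀ i, IntervalIntegrable (ρ i) volume (a i) (b i))
    (f : Fin p → ℂ → ℂ)
    (hf : ∀ i, ∀ z : ℂ, z ∉ Complex.ofReal '' Set.Icc (a i) (b i) →
      f i z = (2 * (Real.pi : ℂ) * Complex.I)⁻¹ * ∫ x in (a i)..(b i), ρ i x / ((x : ℂ) - z))
    (n : Fin p → ℕ)
    (Q : Polynomial ℂ)
    (hHP : ∀ i, ∃ P : Polynomial ℂ, ∃ C : ℝ, ∀ᶠ z in Bornology.cobounded ℂ,
      ‖z ^ (n i + 1) * (Q.eval z * f i z - P.eval z)‖ ≤ C) :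
    ∀ i, ∀ k : ℕ, k < n i →
      (∫ x in (a i)..(b i), Q.eval (x : ℂ) * (x : ℂ) ^ k * ρ i x) = 0 := by
  intro i k hk
  obtain ⟨P, C, hP⟩ := hHP i
  have hf' : ∀ᶠ z in cobounded ℂ,
      f i z = (2 * (Real.pi : ℂ) * Complex.I)⁻¹ * cauchyTransform (a i) (b i) (ρ i) z :=
    eventually_notMem_image_uIcc.mono fun z hz =>
      hf i z fun hz' => hz (Set.image_mono Set.Icc_subset_uIcc hz')
  have hbd := isBoundedUnder_pow_mul_cauchyTransform (inv_ne_zero two_pi_I_ne_zero) (hρ i)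
    (isBoundedUnder_of_eventually_le (a := C) <| by
      filter_upwards [hP, hf'] with z hz hfz
      rwa [hfz] at hz)
  simpa only [mul_assoc, mul_left_comm] using
    integral_pow_mul_eq_zero_of_isBoundedUnder ((hρ i).polynomial_eval_mul Q) hbd k hk

/-- The denominator of a Hermite–Padé approximant to a vector of Cauchy
transforms of integrable densities on mutually disjoint intervals satisfies the multiple
(non-Hermitian) orthogonality relations. -/
theorem hermitePade_orthogonality (p : ℕ) (hp : 1 ≤ p)
    (a b : Fin p → ℝ) (hab : ∀ i, a i < b i)
    (hdisj : ∀ i j, i ≠ j → Disjoint (Set.Icc (a i) (b i)) (Set.Icc (a j) (b j)))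
    (ρ : Fin p → ℝ → ℂ)
    (hρ : ∀ i, IntervalIntegrable (ρ i) volume (a i) (b i))
    (f : Fin p → ℂ → ℂ)
    (hf : ∀ i, ∀ z : ℂ, z ∉ Complex.ofReal '' Set.Icc (a i) (b i) →
      f i z = (2 * (Real.pi : ℂ) * Complex.I)⁻¹ * ∫ x in (a i)..(b i), ρ i x / ((x : ℂ) - z))
    (n : Fin p → ℕ)
    (Q : Polynomial ℂ) (hQ : Q.natDegree ≤ ∑ i, n i)
    (hHP : ∀ i, ∃ P : Polynomial ℂ, ∃ C : ℝ, ∀ᶠ z in Bornology.cobounded ℂ,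
      ‖z ^ (n i + 1) * (Q.eval z * f i z - P.eval z)‖ ≤ C) :
    ∀ i, ∀ k : ℕ, k < n i →
      (∫ x in (a i)..(b i), Q.eval (x : ℂ) * (x : ℂ) ^ k * ρ i x) = 0 :=
  hermitePade_orthogonality_general p a b ρ hρ f hf n Q hHP
end

section
/- Let c = (c_1,…,c_p) and, for each m, c^{(m)} = (c^{(m)}_1,…,c^{(m)}_p) be vectors of positive numbers with c^{(m)}_i → c_i for each i as m → ∞. Let ω ∈ M_c satisfy I[ω] < ∞, and for each m let ω^{(m)} be a minimizer of the vector energy I over M_{c^{(m)}}. Then limsup_{m→∞} I[ω^{(m)}] ≤ I[ω]. In particular, if ω minimizes I over M_c, then limsup_{m→∞} I[ω^{(m)}] ≤ I[ω]. -/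
open MeasureTheory Filter Topology

noncomputable section

/-- Mutual logarithmic energy `I[μ,ν] = −∫∫ log|z−t| dμ(t) dν(z)`, with values in
`(−∞, +∞]` (an `EReal`): the positive part of the kernel minus its negative part. -/
def mutualEnergy (μ ν : Measure ℝ) : EReal :=
  (ENNReal.toEReal (∫⁻ q : ℝ × ℝ, ENNReal.ofReal (-Real.log |q.2 - q.1|) ∂(ν.prod μ)))
    - (ENNReal.toEReal (∫⁻ q : ℝ × ℝ, ENNReal.ofReal (Real.log |q.2 - q.1|) ∂(ν.prod μ)))

/-- The vector energy `I[ν] = Σ_i ( 2 I[ν_i] + Σ_{k≠i} I[ν_i,ν_k] )`. -/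
def vecEnergy {p : ℕ} (ν : Fin p → Measure ℝ) : EReal :=
  ∑ i, ((2 : EReal) * mutualEnergy (ν i) (ν i) +
    ∑ k ∈ Finset.univ.erase i, mutualEnergy (ν i) (ν k))

/-- `ν ∈ M_c`: each `ν_i` is a positive measure supported in `[a_i,b_i]` of total mass `c_i`. -/
def InMclass {p : ℕ} (a b c : Fin p → ℝ) (ν : Fin p → Measure ℝ) : Prop :=
  ∀ i, ν i (Set.Icc (a i) (b i))ᶜ = 0 ∧ ν i Set.univ = ENNReal.ofReal (c i)

/-- `ω` minimizes the vector energy over the class `M_c`. -/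
def IsMinimizer {p : ℕ} (a b c : Fin p → ℝ) (ω : Fin p → Measure ℝ) : Prop :=
  InMclass a b c ω ∧ ∀ ν : Fin p → Measure ℝ, InMclass a b c ν → vecEnergy ω ≤ vecEnergy ν

/-- Logarithmic potential `V^μ(z) = −∫ log|z−t| dμ(t)` at a complex point. -/
def logPot (μ : Measure ℝ) (z : ℂ) : ℝ :=
  -∫ t, Real.log ‖z - (t : ℂ)‖ ∂μ

/-- Logarithmic potential at a real point. -/
def logPotR (μ : Measure ℝ) (x : ℝ) : ℝ :=
  -∫ t, Real.log |x - t| ∂μ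

/-- The (closed) support of a measure on `ℝ`. -/
def msupport (μ : Measure ℝ) : Set ℝ := {x : ℝ | ∀ U ∈ nhds x, 0 < μ U}

end

/-!
Rescaling each `ω_i` by `c^{(m)}_i / c_i` gives a competitor in `M_{c^{(m)}}`. The energy of the
rescaled vector is a quadratic form in the scaling factors whose coefficients are the mutual
energies of `ω`: these are finite, bounded below because the supports are compact and above
because `I[ω] < ∞`. Hence the competitors' energies tend to `I[ω]`, and they dominate
`I[ω^{(m)}]` by minimality.
-/

open scoped ENNReal

@[simp, norm_cast]
theorem EReal.coe_finsetSum {ι : Type*} (s : Finset ι) (f : ι → ℝ) :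
    ((∑ i ∈ s, f i : ℝ) : EReal) = ∑ i ∈ s, (f i : EReal) :=
  map_sum (⟨⟨Real.toEReal, EReal.coe_zero⟩, EReal.coe_add⟩ : ℝ →+ EReal) f s

theorem EReal.sum_ne_bot {ι : Type*} {s : Finset ι} {f : ι → EReal}
    (hf : ∀ i ∈ s, f i ≠ ⊥) : ∑ i ∈ s, f i ≠ ⊥ :=
  Finset.sum_induction f (· ≠ ⊥) (fun _ _ ha hb => EReal.add_ne_bot_iff.2 ⟨ha, hb⟩)
    EReal.zero_ne_bot hf

theorem EReal.sum_ne_top_iff {ι : Type*} {s : Finset ι} {f : ι → EReal}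
    (hf : ∀ i ∈ s, f i ≠ ⊥) : ∑ i ∈ s, f i ≠ ⊤ ↔ ∀ i ∈ s, f i ≠ ⊤ := by
  induction s using Finset.cons_induction with
  | empty => simp
  | cons j s hj ih =>
    rw [Finset.forall_mem_cons] at hf
    rw [Finset.sum_cons, EReal.add_ne_top_iff_ne_top₂ hf.1 (EReal.sum_ne_bot hf.2), ih hf.2,
      Finset.forall_mem_cons]

section MutualEnergy

variable {μ ν : Measure ℝ}

theorem mutualEnergy_smul_smul [SFinite μ] [SFinite ν] {s t : ℝ≥0∞} (hst : s * t ≠ ∞) :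
    mutualEnergy (s • μ) (t • ν) = ((s * t : ℝ≥0∞) : EReal) * mutualEnergy μ ν := by
  simp only [mutualEnergy, Measure.prod_smul_left, Measure.prod_smul_right, smul_smul,
    lintegral_smul_measure, smul_eq_mul, EReal.coe_ennreal_mul (s * t)]
  exact (EReal.mul_sub_of_nonneg_of_ne_top (EReal.coe_ennreal_nonneg _)
    (EReal.coe_ennreal_eq_top_iff.not.2 hst)).symm

theorem lintegral_ofReal_log_abs_sub_lt_top [IsFiniteMeasure μ] [IsFiniteMeasure ν]
    {s t : Set ℝ} (hs : Bornology.IsBounded s) (ht : Bornology.IsBounded t)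
    (hμ : μ sᶜ = 0) (hν : ν tᶜ = 0) :
    ∫⁻ q : ℝ × ℝ, ENNReal.ofReal (Real.log |q.2 - q.1|) ∂(ν.prod μ) < ∞ := by
  obtain ⟨R, hR⟩ := hs.exists_norm_le
  obtain ⟨R', hR'⟩ := ht.exists_norm_le
  have hbound : ∀ᵐ q ∂(ν.prod μ),
      ENNReal.ofReal (Real.log |q.2 - q.1|) ≤ ENNReal.ofReal (R + R') := by
    filter_upwards [Measure.quasiMeasurePreserving_snd.ae (measure_eq_zero_iff_ae_notMem.1 hμ),
      Measure.quasiMeasurePreserving_fst.ae (measure_eq_zero_iff_ae_notMem.1 hν)] with q h2 h1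
    refine ENNReal.ofReal_le_ofReal ((Real.log_le_self (abs_nonneg _)).trans ?_)
    have := hR q.2 (by simpa using h2)
    have := hR' q.1 (by simpa using h1)
    simp only [Real.norm_eq_abs] at *
    linarith [abs_sub q.2 q.1]
  calc _ ≤ ∫⁻ _, ENNReal.ofReal (R + R') ∂(ν.prod μ) := lintegral_mono_ae hbound
    _ < ∞ := by simp [lintegral_const, ENNReal.mul_lt_top]

theorem mutualEnergy_ne_bot [IsFiniteMeasure μ] [IsFiniteMeasure ν] {s t : Set ℝ}
    (hs : Bornology.IsBounded s) (ht : Bornology.IsBounded t) (hμ : μ sᶜ = 0) (hν : ν tᶜ = 0) : mutualEnergy μ ν ≠ ⊥ := by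
  rw [mutualEnergy, sub_eq_add_neg, EReal.add_ne_bot_iff]
  exact ⟨EReal.coe_ennreal_ne_bot _,
    by simpa using (lintegral_ofReal_log_abs_sub_lt_top hs ht hμ hν).ne⟩

end MutualEnergy

theorem mutualEnergy_ne_top_of_vecEnergy_ne_top {p : ℕ} {ω : Fin p → Measure ℝ}
    (hbot : ∀ i k, mutualEnergy (ω i) (ω k) ≠ ⊥) (h : vecEnergy ω ≠ ⊤) (i k : Fin p) :
    mutualEnergy (ω i) (ω k) ≠ ⊤ := by
  have two_mul_ne_bot : ∀ j, 2 * mutualEnergy (ω j) (ω j) ≠ ⊥ := fun j =>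
    (EReal.mul_ne_bot _ _).2 ⟨.inl (EReal.coe_ne_bot 2), .inr (hbot j j),
      .inl (EReal.coe_ne_top 2), .inl (by norm_num)⟩
  have hsum_ne_bot : ∀ j, ∑ l ∈ Finset.univ.erase j, mutualEnergy (ω j) (ω l) ≠ ⊥ := fun j =>
    EReal.sum_ne_bot fun l _ => hbot j l
  have hterm := (EReal.sum_ne_top_iff fun j _ => EReal.add_ne_bot_iff.2
    ⟨two_mul_ne_bot j, hsum_ne_bot j⟩).1 h i (Finset.mem_univ i)
  rw [EReal.add_ne_top_iff_ne_top₂ (two_mul_ne_bot i) (hsum_ne_bot i),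
    EReal.sum_ne_top_iff fun l _ => hbot i l] at hterm
  rcases eq_or_ne k i with rfl | hki
  · exact fun htop => hterm.1 (by rw [htop, EReal.mul_top_of_pos (by norm_num)])
  · exact hterm.2 k (Finset.mem_erase.2 ⟨hki, Finset.mem_univ k⟩)

def vecEnergyForm {p : ℕ} (e : Fin p → Fin p → ℝ) (r : Fin p → ℝ) : ℝ :=
  ∑ i, (2 * (r i * r i * e i i) + ∑ k ∈ Finset.univ.erase i, r i * r k * e i k)

theorem continuous_vecEnergyForm {p : ℕ} (e : Fin p → Fin p → ℝ) :
    Continuous (vecEnergyForm e) := by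
  unfold vecEnergyForm
  fun_prop

theorem vecEnergy_smul {p : ℕ} {ω : Fin p → Measure ℝ} [∀ i, SFinite (ω i)]
    {e : Fin p → Fin p → ℝ} (he : ∀ i k, mutualEnergy (ω i) (ω k) = e i k)
    {s : Fin p → ℝ≥0∞} (hs : ∀ i, s i ≠ ∞) :
    vecEnergy (fun i => s i • ω i) = vecEnergyForm e (fun i => (s i).toReal) := by
  have hme : ∀ i k, mutualEnergy (s i • ω i) (s k • ω k)
      = ((s i).toReal * (s k).toReal * e i k : ℝ) := fun i k => by
    have hik := ENNReal.mul_ne_top (hs i) (hs k)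
    rw [mutualEnergy_smul_smul hik, he, ← EReal.coe_ennreal_toReal hik, ENNReal.toReal_mul]
    norm_cast
  simp only [vecEnergy, vecEnergyForm, hme]
  push_cast
  rfl

theorem tendsto_vecEnergy_smul {α : Type*} {l : Filter α} {p : ℕ} {ω : Fin p → Measure ℝ}
    [∀ i, SFinite (ω i)] {e : Fin p → Fin p → ℝ}
    (he : ∀ i k, mutualEnergy (ω i) (ω k) = e i k) {s : α → Fin p → ℝ≥0∞}
    (hs : ∀ x i, s x i ≠ ∞) (hs_lim : ∀ i, Tendsto (fun x => s x i) l (𝓝 1)) :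
    Tendsto (fun x => vecEnergy (fun i => s x i • ω i)) l (𝓝 (vecEnergy ω)) := by
  have hω : vecEnergy ω = vecEnergyForm e 1 := by
    simpa [Pi.one_def] using vecEnergy_smul he (s := 1) (by simp)
  simp only [hω, vecEnergy_smul he (hs _)]
  refine EReal.tendsto_coe.2 ((continuous_vecEnergyForm e).tendsto 1 |>.comp ?_)
  refine tendsto_pi_nhds.2 fun i => ?_
  simpa only [Function.comp_def, ENNReal.toReal_one, Pi.one_apply] using
    (ENNReal.tendsto_toReal ENNReal.one_ne_top).comp (hs_lim i)

theorem InMclass.rescale {p : ℕ} {a b c : Fin p → ℝ} {ω : Fin p → Measure ℝ}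
    (hω : InMclass a b c ω) (hc : ∀ i, 0 < c i) (c' : Fin p → ℝ) :
    InMclass a b c' (fun i => ENNReal.ofReal (c' i / c i) • ω i) := fun i => by
  refine ⟨by simp [(hω i).1], ?_⟩
  rw [Measure.smul_apply, (hω i).2, smul_eq_mul, ← ENNReal.ofReal_mul' (hc i).le,
    div_mul_cancel₀ _ (hc i).ne']

theorem limsup_minimal_energy_le_general (p : ℕ)
    (a b : Fin p → ℝ)
    (c : Fin p → ℝ) (hc : ∀ i, 0 < c i)
    (cm : ℕ → Fin p → ℝ)
    (hconv : ∀ i, Tendsto (fun m => cm m i) atTop (𝓝 (c i)))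
    (ω : Fin p → Measure ℝ) (hω : InMclass a b c ω) (hfin : vecEnergy ω < ⊤)
    (ωm : ℕ → Fin p → Measure ℝ) (hωm : ∀ m, IsMinimizer a b (cm m) (ωm m)) :
    Filter.limsup (fun m => vecEnergy (ωm m)) atTop ≤ vecEnergy ω := by
  have : ∀ i, IsFiniteMeasure (ω i) := fun i => ⟨by simp [(hω i).2]⟩
  have hbot : ∀ i k, mutualEnergy (ω i) (ω k) ≠ ⊥ := fun i k =>
    mutualEnergy_ne_bot (Metric.isBounded_Icc _ _) (Metric.isBounded_Icc _ _) (hω i).1 (hω k).1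
  have he : ∀ i k, mutualEnergy (ω i) (ω k) = (mutualEnergy (ω i) (ω k)).toReal := fun i k =>
    (EReal.coe_toReal (mutualEnergy_ne_top_of_vecEnergy_ne_top hbot hfin.ne i k) (hbot i k)).symm
  have hs_lim : ∀ i, Tendsto (fun m => ENNReal.ofReal (cm m i / c i)) atTop (𝓝 1) := fun i => by
    simpa [div_self (hc i).ne'] using ENNReal.tendsto_ofReal ((hconv i).div_const (c i))
  calc Filter.limsup (fun m => vecEnergy (ωm m)) atTop
      ≤ Filter.limsup (fun m => vecEnergy (fun i => ENNReal.ofReal (cm m i / c i) • ω i)) atTop :=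
        Filter.limsup_le_limsup (.of_forall fun m => (hωm m).2 _ (hω.rescale hc (cm m)))
    _ = vecEnergy ω :=
        (tendsto_vecEnergy_smul he (fun _ _ => ENNReal.ofReal_ne_top) hs_lim).limsup_eq

/-- Upper semicontinuity of the minimal vector energies with respect to the
mass vector: if `c^{(m)} → c` and `ω^{(m)}` minimizes over `M_{c^{(m)}}`, then
`limsup I[ω^{(m)}] ≤ I[ω]` for any `ω ∈ M_c` of finite energy. -/
theorem limsup_minimal_energy_le (p : ℕ) (hp : 1 ≤ p)
    (a b : Fin p → ℝ) (hab : ∀ i, a i < b i)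
    (hdisj : ∀ i j, i ≠ j → Disjoint (Set.Icc (a i) (b i)) (Set.Icc (a j) (b j)))
    (c : Fin p → ℝ) (hc : ∀ i, 0 < c i)
    (cm : ℕ → Fin p → ℝ) (hcm : ∀ m i, 0 < cm m i)
    (hconv : ∀ i, Tendsto (fun m => cm m i) atTop (𝓝 (c i)))
    (ω : Fin p → Measure ℝ) (hω : InMclass a b c ω) (hfin : vecEnergy ω < ⊤)
    (ωm : ℕ → Fin p → Measure ℝ) (hωm : ∀ m, IsMinimizer a b (cm m) (ωm m)) :
    Filter.limsup (fun m => vecEnergy (ωm m)) atTop ≤ vecEnergy ω :=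
  limsup_minimal_energy_le_general p a b c hc cm hconv ω hω hfin ωm hωm
end
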